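/- arXiv:2401.07440 — 2 statements merged into one kernel-verified Lean document; each statement's English description precedes it below -/
import Mathlib

section
/- Let S be a finite set, let score : S → ℕ be a function, and let q be a natural number with 1 ≤ q ≤ |S|. Suppose Q₁ and Q₂ are two q-element subsets of S, each of which maximizes the sum of score over all q-element subsets of S. Then the minimum value of score on Q₁ equals the minimum value of score on Q₂, and the number of elements of Q₁ attaining this minimum equals the number of elements of Q₂ attaining it. -/
/-! If `Q` maximizes the sum of `f` among sets of its size, then exchanging a minimal element of
`Q` for any outsider cannot increase the sum, so every element scoring strictly more than
`min_Q f` lies in `Q`. Two maximizing sets `A`, `B` of the same size therefore have the same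
minimum `m`: if `min_A f < min_B f`, all of `B` would lie in `A`, forcing `B = A`. Both then
contain exactly the elements scoring above `m`, and their remaining elements are those scoring `m`. -/

namespace Finset

variable {S β : Type*} [LinearOrder β] {f : S → β}

theorem card_filter_eq_inf' (Q : Finset S) (hne : Q.Nonempty) :
    (Q.filter fun d => f d = Q.inf' hne f).card =
      Q.card - (Q.filter fun d => Q.inf' hne f < f d).card := by
  rw [← card_filter_add_card_filter_not (s := Q) (p := fun d => Q.inf' hne f < f d),
    Nat.add_sub_cancel_left]
  congr 1
  refine filter_congr fun d hd => ?_
  rw [not_lt, le_antisymm_iff, and_iff_left (inf'_le f hd)]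

variable [AddCommMonoid β] [IsOrderedCancelAddMonoid β]

theorem mem_of_inf'_lt_of_maximizing {Q : Finset S} (hne : Q.Nonempty)
    (hmax : ∀ P : Finset S, P.card = Q.card → ∑ d ∈ P, f d ≤ ∑ d ∈ Q, f d)
    {x : S} (hx : Q.inf' hne f < f x) : x ∈ Q := by
  classical
  by_contra hxQ
  obtain ⟨d, hdQ, hd⟩ := Q.exists_mem_eq_inf' hne f
  have hxd : x ∉ Q.erase d := fun h => hxQ (mem_of_mem_erase h)
  have hcard : (insert x (Q.erase d)).card = Q.card := by
    rw [card_insert_of_notMem hxd, card_erase_add_one hdQ]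
  have hsum : ∑ y ∈ Q, f y < ∑ y ∈ insert x (Q.erase d), f y := by
    rw [sum_insert hxd, ← add_sum_erase Q f hdQ, ← hd]
    exact add_lt_add_left hx _
  exact (hmax _ hcard).not_gt hsum

theorem inf'_le_inf'_of_maximizing {A B : Finset S} (hA : A.Nonempty) (hB : B.Nonempty)
    (hmaxA : ∀ P : Finset S, P.card = A.card → ∑ d ∈ P, f d ≤ ∑ d ∈ A, f d)
    (hcard : B.card = A.card) : B.inf' hB f ≤ A.inf' hA f := by
  by_contra! hlt
  have hsub : B ⊆ A := fun x hx =>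
    mem_of_inf'_lt_of_maximizing hA hmaxA (hlt.trans_le (inf'_le f hx))
  obtain rfl : B = A := eq_of_subset_of_card_le hsub hcard.ge
  exact hlt.false

theorem filter_inf'_lt_eq_of_maximizing {A B : Finset S} (hA : A.Nonempty) (hB : B.Nonempty)
    (hinf : A.inf' hA f = B.inf' hB f)
    (hmaxA : ∀ P : Finset S, P.card = A.card → ∑ d ∈ P, f d ≤ ∑ d ∈ A, f d)
    (hmaxB : ∀ P : Finset S, P.card = B.card → ∑ d ∈ P, f d ≤ ∑ d ∈ B, f d) :
    (A.filter fun d => A.inf' hA f < f d) = B.filter fun d => B.inf' hB f < f d := by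
  ext x
  simp only [mem_filter, hinf]
  exact ⟨fun ⟨_, hx⟩ => ⟨mem_of_inf'_lt_of_maximizing hB hmaxB hx, hx⟩,
    fun ⟨_, hx⟩ => ⟨mem_of_inf'_lt_of_maximizing hA hmaxA (hinf ▸ hx), hx⟩⟩

end Finset

open Finset in
theorem maximizing_sets_same_min_and_multiplicity_general
    {S : Type*} (score : S → ℕ) (q : ℕ)
    (Q₁ Q₂ : Finset S) (hne₁ : Q₁.Nonempty) (hne₂ : Q₂.Nonempty)
    (hcard₁ : Q₁.card = q) (hcard₂ : Q₂.card = q)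
    (hmax₁ : ∀ Q : Finset S, Q.card = q → ∑ d ∈ Q, score d ≤ ∑ d ∈ Q₁, score d)
    (hmax₂ : ∀ Q : Finset S, Q.card = q → ∑ d ∈ Q, score d ≤ ∑ d ∈ Q₂, score d) :
    Q₁.inf' hne₁ score = Q₂.inf' hne₂ score ∧
      (Q₁.filter fun d => score d = Q₁.inf' hne₁ score).card =
        (Q₂.filter fun d => score d = Q₂.inf' hne₂ score).card := by
  have hmax₁' : ∀ P : Finset S, P.card = Q₁.card → _ := fun P hP => hmax₁ P (hP.trans hcard₁)
  have hmax₂' : ∀ P : Finset S, P.card = Q₂.card → _ := fun P hP => hmax₂ P (hP.trans hcard₂)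
  have hinf : Q₁.inf' hne₁ score = Q₂.inf' hne₂ score :=
    le_antisymm (inf'_le_inf'_of_maximizing hne₂ hne₁ hmax₂' (hcard₁.trans hcard₂.symm))
      (inf'_le_inf'_of_maximizing hne₁ hne₂ hmax₁' (hcard₂.trans hcard₁.symm))
  refine ⟨hinf, ?_⟩
  rw [card_filter_eq_inf', card_filter_eq_inf',
    filter_inf'_lt_eq_of_maximizing hne₁ hne₂ hinf hmax₁' hmax₂', hcard₁, hcard₂]

/-- **The minimum score in a maximizing set, and its multiplicity, are
well-defined.**  Let `S` be a finite set, `score : S → ℕ`, and `1 ≤ q ≤ |S|`.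
If `Q₁` and `Q₂` are two `q`-element subsets of `S`, each maximizing the sum
of `score` over all `q`-element subsets, then the minimum value of `score`
on `Q₁` equals the minimum value on `Q₂`, and the number of elements of `Q₁`
attaining this minimum equals the number of elements of `Q₂` attaining it. -/
theorem maximizing_sets_same_min_and_multiplicity
    {S : Type*} [Fintype S] [DecidableEq S] (score : S → ℕ) (q : ℕ)
    (hq : 1 ≤ q) (hqcard : q ≤ Fintype.card S)
    (Q₁ Q₂ : Finset S) (hne₁ : Q₁.Nonempty) (hne₂ : Q₂.Nonempty)
    (hcard₁ : Q₁.card = q) (hcard₂ : Q₂.card = q)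
    (hmax₁ : ∀ Q : Finset S, Q.card = q → ∑ d ∈ Q, score d ≤ ∑ d ∈ Q₁, score d)
    (hmax₂ : ∀ Q : Finset S, Q.card = q → ∑ d ∈ Q, score d ≤ ∑ d ∈ Q₂, score d) :
    Q₁.inf' hne₁ score = Q₂.inf' hne₂ score ∧
      (Q₁.filter fun d => score d = Q₁.inf' hne₁ score).card =
        (Q₂.filter fun d => score d = Q₂.inf' hne₂ score).card :=
  maximizing_sets_same_min_and_multiplicity_general score q Q₁ Q₂ hne₁ hne₂ hcard₁ hcard₂ hmax₁
    hmax₂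
end

section
/- Let p, j, m be natural numbers with p ≥ 2, j ≥ 2p², and m ≥ 1. Then, as rational numbers, p + (2p−1)m < 2p(1 − p/(j+p))(m+1) − 1; equivalently, (p + (2p−1)m + 1)(j+p) < 2pj(m+1). -/
/-!
Writing `n = p + (2p - 1)m`, the difference `2pj(m + 1) - (n + 1)j` equals `j(p + m - 1)`, so the claim
reduces to `p(n + 1) < j(p + m - 1)`. Since `j ≥ 2p²`, the right side is at least `2p²(p + m - 1)`,
which exceeds `p(n + 1)` by `p((2p + 1)(p - 2) + m + 1) > 0`.
-/

section OrderedRing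

variable {R : Type*} [CommRing R] [LinearOrder R] [IsStrictOrderedRing R] {p j m : R}

theorem mul_proportional_breakpoint_succ_lt (hp : 2 ≤ p) (hj : 2 * p ^ 2 ≤ j) (hm : 1 ≤ m) :
    p * (p + (2 * p - 1) * m + 1) < j * (p + m - 1) := by
  have hj' : 2 * p ^ 2 * (p + m - 1) ≤ j * (p + m - 1) :=
    mul_le_mul_of_nonneg_right hj (by linarith)
  have hgap : 0 < p * ((2 * p + 1) * (p - 2) + m + 1) :=
    mul_pos (by linarith) (by nlinarith)
  linear_combination hj' + hgap

theorem proportional_breakpoint_succ_mul_lt (hp : 2 ≤ p) (hj : 2 * p ^ 2 ≤ j) (hm : 1 ≤ m) :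
    (p + (2 * p - 1) * m + 1) * (j + p) < 2 * p * j * (m + 1) := by
  linear_combination mul_proportional_breakpoint_succ_lt hp hj hm

end OrderedRing

theorem proportional_breakpoint_lt_cracking_bound_field {K : Type*} [Field K] [LinearOrder K]
    [IsStrictOrderedRing K] {p j m : K} (hp : 2 ≤ p) (hj : 2 * p ^ 2 ≤ j) (hm : 1 ≤ m) :
    p + (2 * p - 1) * m < 2 * p * (1 - p / (j + p)) * (m + 1) - 1 := by
  have hjp : 0 < j + p := by nlinarith
  have hcrack : 2 * p * (1 - p / (j + p)) * (m + 1) = 2 * p * j * (m + 1) / (j + p) := by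
    field_simp
    ring
  rw [hcrack, lt_sub_iff_add_lt, lt_div_iff₀ hjp]
  exact proportional_breakpoint_succ_mul_lt hp hj hm

/-- If `p ≥ 2`, `j ≥ 2p²` and `m ≥ 1`, then, as rational numbers,
`p + (2p−1)m < 2p(1 − p/(j+p))(m+1) − 1`; equivalently (in ℕ),
`(p + (2p−1)m + 1)(j+p) < 2pj(m+1)`. -/
theorem proportional_breakpoint_lt_cracking_bound
    (p j m : ℕ) (hp : 2 ≤ p) (hj : 2 * p ^ 2 ≤ j) (hm : 1 ≤ m) :
    (p : ℚ) + (2 * (p : ℚ) - 1) * (m : ℚ) <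
        2 * (p : ℚ) * (1 - (p : ℚ) / ((j : ℚ) + (p : ℚ))) * ((m : ℚ) + 1) - 1 ∧
      (p + (2 * p - 1) * m + 1) * (j + p) < 2 * p * j * (m + 1) := by
  constructor
  · exact proportional_breakpoint_lt_cracking_bound_field (by exact_mod_cast hp)
      (by exact_mod_cast hj) (by exact_mod_cast hm)
  · zify [show 1 ≤ 2 * p by omega]
    exact proportional_breakpoint_succ_mul_lt (by exact_mod_cast hp) (by exact_mod_cast hj)
      (by exact_mod_cast hm)
end
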